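/- arXiv:2308.13010 — 3 statements merged into one kernel-verified Lean document; each statement's English description precedes it below -/
import Mathlib

section
/- In a median graph, each edge (x,y) lies on the edge boundary of a unique half-space, namely cone_x(y) = {z : d(x,z) > d(y,z)}; conversely each nontrivial half-space H equals cone_x(y) for any edge (x,y) crossing into H. Hence hyperplanes (inward edge boundaries of nontrivial half-spaces) partition the edges into equivalence classes. -/
open SimpleGraph

variable {X : Type*}

/-- The geodesic interval between `x` and `y`. -/
def interval (G : SimpleGraph X) (x y : X) : Set X :=
  {z | G.dist x z + G.dist z y = G.dist x y}

/-- A set is convex if it contains all geodesics between its points. -/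
def IsConvexSet (G : SimpleGraph X) (A : Set X) : Prop :=
  ∀ x ∈ A, ∀ y ∈ A, interval G x y ⊆ A

/-- A median graph: connected, and every triple has a unique median. -/
def IsMedianGraph (G : SimpleGraph X) : Prop :=
  G.Connected ∧ ∀ x y z : X, ∃! m : X,
    m ∈ interval G x y ∧ m ∈ interval G y z ∧ m ∈ interval G z x

/-- The cone at `y` away from `x`. -/
def cone (G : SimpleGraph X) (x y : X) : Set X :=
  {z | y ∈ interval G x z}

/-- A half-space: a convex set with convex complement. -/
def IsHalfspace (G : SimpleGraph X) (H : Set X) : Prop :=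
  IsConvexSet G H ∧ IsConvexSet G Hᶜ

/-- Convex hull. -/
def convexHullG (G : SimpleGraph X) (A : Set X) : Set X :=
  ⋂₀ {B : Set X | IsConvexSet G B ∧ A ⊆ B}

/-- Inward edge boundary of a set. -/
def edgeBoundaryIn (G : SimpleGraph X) (H : Set X) : Set (X × X) :=
  {e | G.Adj e.1 e.2 ∧ e.1 ∉ H ∧ e.2 ∈ H}

/-- Two sets are nested if one of the four corners is empty. -/
def Nested (A B : Set X) : Prop :=
  A ∩ B = ∅ ∨ A ∩ Bᶜ = ∅ ∨ Aᶜ ∩ B = ∅ ∨ Aᶜ ∩ Bᶜ = ∅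

open Classical in
noncomputable def medianOf (G : SimpleGraph X) (x y z : X) : X :=
  if h : ∃! m : X, m ∈ interval G x y ∧ m ∈ interval G y z ∧ m ∈ interval G z x
  then h.choose else x

open Classical in
noncomputable def projOn (G : SimpleGraph X) (A : Set X) (x : X) : X :=
  if h : ∃ p, p ∈ A ∧ ∀ a ∈ A, p ∈ interval G x a then h.choose else x


/-- Edges crossing out of a set. -/
def crossEdges (G : SimpleGraph X) (A : Set X) : Set (X × X) :=
  {e | G.Adj e.1 e.2 ∧ e.1 ∈ A ∧ e.2 ∉ A}

/-- Total vertex boundary of a set. -/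
def vBoundary (G : SimpleGraph X) (A : Set X) : Set X :=
  {x | ∃ y, G.Adj x y ∧ ((x ∈ A ∧ y ∉ A) ∨ (x ∉ A ∧ y ∈ A))}

/-- Two sets are non-nested if all four corners are nonempty. -/
def NonNested (A B : Set X) : Prop :=
  (A ∩ B).Nonempty ∧ (A ∩ Bᶜ).Nonempty ∧ (Aᶜ ∩ B).Nonempty ∧ (Aᶜ ∩ Bᶜ).Nonempty

/-- `H` is a successor of `K`: both are half-spaces, `K ⊊ H`, with no half-space
strictly in between. -/
def Successor (G : SimpleGraph X) (H K : Set X) : Prop :=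
  IsHalfspace G H ∧ IsHalfspace G K ∧ K ⊂ H ∧
    ¬ ∃ L : Set X, IsHalfspace G L ∧ K ⊂ L ∧ L ⊂ H

/-- Adjacency of the hyperplanes of half-spaces `H`, `K`. -/
def HypAdj (G : SimpleGraph X) (H K : Set X) : Prop :=
  H = K ∨ H = Kᶜ ∨ NonNested H K ∨
  Successor G H K ∨ Successor G K H ∨
  Successor G Hᶜ K ∨ Successor G K Hᶜ ∨
  Successor G H Kᶜ ∨ Successor G Kᶜ H ∨
  Successor G Hᶜ Kᶜ ∨ Successor G Kᶜ Hᶜ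

/-- The Hamming cube on `{0,1}^n`: strings adjacent iff they differ in exactly one bit. -/
def hammingCube (n : ℕ) : SimpleGraph (Fin n → Bool) :=
  SimpleGraph.fromRel (fun a b => ∃! i : Fin n, a i ≠ b i)

/-- Oriented edges `e`, `f` are parallel sides of a square (4-cycle). -/
def SquareParallel (G : SimpleGraph X) (e f : X × X) : Prop :=
  G.Adj e.1 e.2 ∧ G.Adj f.1 f.2 ∧ G.Adj e.1 f.1 ∧ G.Adj e.2 f.2 ∧ e.1 ≠ f.2 ∧ e.2 ≠ f.1

section Aux

variable {G : SimpleGraph X}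

lemma mem_int {x y z : X} :
    z ∈ interval G x y ↔ G.dist x z + G.dist z y = G.dist x y := Iff.rfl

lemma mem_cone {x y z : X} :
    z ∈ cone G x y ↔ G.dist x y + G.dist y z = G.dist x z := Iff.rfl

lemma dc (G : SimpleGraph X) (a b : X) : G.dist a b = G.dist b a :=
  SimpleGraph.dist_comm

lemma int_symm {x y z : X} (h : z ∈ interval G x y) : z ∈ interval G y x := by
  rw [mem_int] at h ⊢
  rw [dc G y z, dc G z x, dc G y x]
  omega

/-- If `w ∈ [u,v]` and `z ∈ [u,w]` then `z ∈ [u,v]` and `w ∈ [z,v]`. -/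
lemma int_trans (hc : G.Connected) {u v w z : X}
    (hw : w ∈ interval G u v) (hz : z ∈ interval G u w) :
    z ∈ interval G u v ∧ w ∈ interval G z v := by
  have t1 := hc.dist_triangle (u := z) (v := w) (w := v)
  have t2 := hc.dist_triangle (u := u) (v := z) (w := v)
  rw [mem_int] at hw hz
  rw [mem_int, mem_int]
  omega

/-- If `u ∈ [a,v]` and `z ∈ [u,v]` then `z ∈ [a,v]`. -/
lemma int_trans' (hc : G.Connected) {a u v z : X}
    (hu : u ∈ interval G a v) (hz : z ∈ interval G u v) :
    z ∈ interval G a v := by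
  have t1 := hc.dist_triangle (u := a) (v := u) (w := z)
  have t2 := hc.dist_triangle (u := a) (v := z) (w := v)
  rw [mem_int] at hu hz
  rw [mem_int]
  omega

lemma mg_step (hc : G.Connected) {u z : X} (h : G.dist u z ≠ 0) :
    ∃ w, G.Adj u w ∧ G.dist w z + 1 = G.dist u z := by
  obtain ⟨p, hp⟩ := SimpleGraph.exists_walk_of_dist_ne_zero h
  cases p with
  | nil => exact absurd hp.symm h
  | cons ha q =>
      rename_i b
      refine ⟨b, ha, ?_⟩
      have h1 : G.dist b z ≤ q.length := SimpleGraph.dist_le q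
      have h3 : G.dist u b = 1 := dist_eq_one_iff_adj.mpr ha
      have h2 : G.dist u z ≤ G.dist u b + G.dist b z := hc.dist_triangle
      simp only [SimpleGraph.Walk.length_cons] at hp
      omega

variable (hc : G.Connected)
  (hm : ∀ x y z : X, ∃! m : X,
    m ∈ interval G x y ∧ m ∈ interval G y z ∧ m ∈ interval G z x)

include hc hm in
lemma mg_dichot {x y : X} (hxy : G.Adj x y) (z : X) :
    1 + G.dist y z = G.dist x z ∨ 1 + G.dist x z = G.dist y z := by
  obtain ⟨m, ⟨h1, h2, h3⟩, -⟩ := hm x y z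
  have hd1 : G.dist x y = 1 := dist_eq_one_iff_adj.mpr hxy
  rw [mem_int] at h1 h2 h3
  have hm0 : G.dist x m = 0 ∨ G.dist m y = 0 := by omega
  rcases hm0 with h0 | h0
  · have hmx : x = m := hc.dist_eq_zero_iff.mp h0
    subst hmx
    right
    have h4 := dc G y x
    omega
  · have hmy : y = m := (hc.dist_eq_zero_iff.mp h0).symm
    subst hmy
    left
    have h4 := dc G z y
    have h5 := dc G y x
    have h6 := dc G z x
    omega

end Aux

section Main

variable {G : SimpleGraph X}
variable (hc : G.Connected)
  (hm : ∀ x y z : X, ∃! m : X,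
    m ∈ interval G x y ∧ m ∈ interval G y z ∧ m ∈ interval G z x)

lemma mem_cone_adj {x y z : X} (hxy : G.Adj x y) :
    z ∈ cone G x y ↔ 1 + G.dist y z = G.dist x z := by
  rw [mem_cone, dist_eq_one_iff_adj.mpr hxy]

include hc hm in
lemma not_mem_cone {x y z : X} (hxy : G.Adj x y) :
    z ∉ cone G x y ↔ 1 + G.dist x z = G.dist y z := by
  rw [mem_cone_adj hxy]
  constructor
  · intro h'
    rcases mg_dichot hc hm hxy z with h | h
    · exact absurd h h'
    · exact h
  · intro h' h''
    omega

include hc hm in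
lemma compl_cone {x y : X} (hxy : G.Adj x y) : (cone G x y)ᶜ = cone G y x := by
  ext z
  rw [Set.mem_compl_iff, not_mem_cone hc hm hxy, mem_cone_adj hxy.symm]

include hc hm in
lemma cone_star {x y u : X} (hxy : G.Adj x y) (hu : u ∈ cone G x y) :
    interval G y u ⊆ cone G x y := by
  intro w hw
  by_contra hwn
  rw [not_mem_cone hc hm hxy] at hwn
  rw [mem_cone_adj hxy] at hu
  rw [mem_int] at hw
  have t := hc.dist_triangle (u := x) (v := w) (w := u)
  omega

include hc hm in
lemma cone_cross {x y u z : X} (hxy : G.Adj x y) (hu : u ∈ cone G x y)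
    (hz : z ∉ cone G x y) (ha : G.Adj u z) :
    G.dist y z = G.dist x u ∧ G.dist x z = G.dist y u := by
  rw [mem_cone_adj hxy] at hu
  rw [not_mem_cone hc hm hxy] at hz
  have hd : G.dist u z = 1 := dist_eq_one_iff_adj.mpr ha
  have hd' := dc G z u
  have t1 := hc.dist_triangle (u := x) (v := u) (w := z)
  have t2 := hc.dist_triangle (u := x) (v := z) (w := u)
  have t3 := hc.dist_triangle (u := y) (v := u) (w := z)
  have t4 := hc.dist_triangle (u := y) (v := z) (w := u)
  omega

include hc hm in
lemma two_convex {x y u t z : X} (hxy : G.Adj x y) (hu : u ∈ cone G x y)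
    (ht : t ∈ cone G x y) (hne : u ≠ t) (h1 : G.Adj u z) (h2 : G.Adj t z) :
    z ∈ cone G x y := by
  by_contra hz
  obtain ⟨cu1, cu2⟩ := cone_cross hc hm hxy hu hz h1
  obtain ⟨ct1, ct2⟩ := cone_cross hc hm hxy ht hz h2
  have hcu : 1 + G.dist y u = G.dist x u := (mem_cone_adj hxy).mp hu
  have hct : 1 + G.dist y t = G.dist x t := (mem_cone_adj hxy).mp ht
  have hdu : G.dist u z = 1 := dist_eq_one_iff_adj.mpr h1
  have hdt : G.dist t z = 1 := dist_eq_one_iff_adj.mpr h2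
  have hut2 : G.dist u t = 2 := by
    have t1 := hc.dist_triangle (u := u) (v := z) (w := t)
    have hzt := dc G z t
    have h0 : G.dist u t ≠ 0 := fun h => hne (hc.dist_eq_zero_iff.mp h)
    have h1' : G.dist u t ≠ 1 := by
      intro hone
      have hadj : G.Adj u t := dist_eq_one_iff_adj.mp hone
      have e1 := dc G t y
      have e2 := dc G u y
      rcases mg_dichot hc hm hadj y with h | h <;> omega
    omega
  obtain ⟨m, ⟨hm1, hm2, hm3⟩, -⟩ := hm u t y
  have hmC : m ∈ cone G x y := cone_star hc hm hxy hu hm3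
  obtain ⟨m', hmed', huniq⟩ := hm u t x
  have hmm : 1 + G.dist y m = G.dist x m := (mem_cone_adj hxy).mp hmC
  rw [mem_int] at hm1 hm2 hm3
  have e1 := dc G y t
  have e2 := dc G x t
  have e3 := dc G x m
  have e4 := dc G y m
  have e5 := dc G x z
  have e6 := dc G y z
  have e7 := dc G x u
  have e8 := dc G z t
  have e9 := dc G z x
  have e10 := dc G z u
  have e11 := dc G t x
  have hzmed : z ∈ interval G u t ∧ z ∈ interval G t x ∧ z ∈ interval G x u := by
    refine ⟨?_, ?_, ?_⟩ <;> rw [mem_int] <;> omega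
  have hmmed : m ∈ interval G u t ∧ m ∈ interval G t x ∧ m ∈ interval G x u := by
    refine ⟨?_, ?_, ?_⟩ <;> rw [mem_int] <;> omega
  have hz' := huniq z hzmed
  have hm'' := huniq m hmmed
  have hzm : z = m := by rw [hz', hm'']
  exact hz (by rw [hzm]; exact hmC)

include hc hm in
lemma mg_qc {u v z₁ p₁ : X} (h1 : G.Adj u z₁) (h2 : G.Adj u p₁) (hne : z₁ ≠ p₁)
    (hz : z₁ ∈ interval G u v) (hp : p₁ ∈ interval G u v) :
    ∃ t, G.Adj z₁ t ∧ G.Adj p₁ t ∧ t ∈ interval G p₁ v ∧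
      G.dist t v + 1 = G.dist p₁ v := by
  have hd1 : G.dist u z₁ = 1 := dist_eq_one_iff_adj.mpr h1
  have hd2 : G.dist u p₁ = 1 := dist_eq_one_iff_adj.mpr h2
  rw [mem_int] at hz hp
  have hzp2 : G.dist z₁ p₁ = 2 := by
    have t1 := hc.dist_triangle (u := z₁) (v := u) (w := p₁)
    have e1 := dc G z₁ u
    have h0 : G.dist z₁ p₁ ≠ 0 := fun h => hne (hc.dist_eq_zero_iff.mp h)
    have h1' : G.dist z₁ p₁ ≠ 1 := by
      intro hone
      rcases mg_dichot hc hm (dist_eq_one_iff_adj.mp hone) v with h | h <;> omega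
    omega
  obtain ⟨t, ⟨ht1, ht2, ht3⟩, -⟩ := hm z₁ p₁ v
  have ht2' := ht2
  rw [mem_int] at ht1 ht2 ht3
  have e2 := dc G v z₁
  have e3 := dc G t p₁
  have e4 := dc G v t
  have e5 := dc G t z₁
  by_cases hz0 : G.dist z₁ t = 0
  · exfalso
    have hzt : z₁ = t := hc.dist_eq_zero_iff.mp hz0
    have hvv : G.dist t v = G.dist z₁ v := by rw [hzt]
    omega
  by_cases hp0 : G.dist t p₁ = 0
  · exfalso
    have hpt : t = p₁ := hc.dist_eq_zero_iff.mp hp0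
    have hvv : G.dist t v = G.dist p₁ v := by rw [hpt]
    omega
  have hdz : G.dist z₁ t = 1 := by omega
  have hdp : G.dist p₁ t = 1 := by omega
  exact ⟨t, dist_eq_one_iff_adj.mp hdz, dist_eq_one_iff_adj.mp hdp, ht2', by omega⟩

include hc hm in
lemma mg_nbr {x y u v : X} (hxy : G.Adj x y) (hu : u ∈ cone G x y)
    (hv : v ∈ cone G x y) :
    interval G u v ⊆ cone G x y ∨
    ∃ p₁, G.Adj u p₁ ∧ p₁ ∈ cone G x y ∧ p₁ ∈ interval G u v ∧
      G.dist p₁ v + 1 = G.dist u v := by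
  obtain ⟨w, ⟨hw1, hw2, hw3⟩, -⟩ := hm u v y
  by_cases hwu : w = u
  · subst hwu
    left
    intro z hz
    exact cone_star hc hm hxy hv (int_trans' hc (int_symm hw2) hz)
  · right
    have h0 : G.dist u w ≠ 0 := fun h => hwu ((hc.dist_eq_zero_iff.mp h).symm)
    obtain ⟨p₁, hap, hdp⟩ := mg_step hc h0
    have hd1 : G.dist u p₁ = 1 := dist_eq_one_iff_adj.mpr hap
    have hp₁w : p₁ ∈ interval G u w := by
      rw [mem_int]
      omega
    obtain ⟨hpI, -⟩ := int_trans hc hw1 hp₁w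
    have hpC : p₁ ∈ cone G x y := by
      have hwy : w ∈ interval G u y := int_symm hw3
      have h' := (int_trans hc hwy hp₁w).1
      exact cone_star hc hm hxy hu (int_symm h')
    refine ⟨p₁, hap, hpC, hpI, ?_⟩
    have h'' := hpI
    rw [mem_int] at h''
    omega

include hc hm in
lemma mg_subclaim {x y : X} (hxy : G.Adj x y) :
    ∀ n (u v z₁ : X), u ∈ cone G x y → v ∈ cone G x y → G.dist u v = n →
      G.Adj u z₁ → z₁ ∈ interval G u v → z₁ ∈ cone G x y := by
  intro n
  induction n using Nat.strong_induction_on with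
  | _ n ih =>
    intro u v z₁ hu hv hn ha hz
    by_cases hzv : z₁ = v
    · rw [hzv]; exact hv
    rcases mg_nbr hc hm hxy hu hv with hsub | ⟨p₁, hap, hpC, hpI, hpd⟩
    · exact hsub hz
    · by_cases hzp : z₁ = p₁
      · rw [hzp]; exact hpC
      · obtain ⟨t, hta, htb, htI, htd⟩ := mg_qc hc hm ha hap hzp hz hpI
        have htC : t ∈ cone G x y :=
          ih (G.dist p₁ v) (by omega) p₁ v t hpC hv rfl htb htI
        have hut : u ≠ t := by
          intro h
          have h' : G.dist u v = G.dist t v := by rw [h]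
          omega
        exact two_convex hc hm hxy hu htC hut ha hta.symm

include hc hm in
lemma cone_convex {x y : X} (hxy : G.Adj x y) : IsConvexSet G (cone G x y) := by
  have main : ∀ n (u v z : X), u ∈ cone G x y → v ∈ cone G x y → G.dist u v = n →
      z ∈ interval G u v → z ∈ cone G x y := by
    intro n
    induction n using Nat.strong_induction_on with
    | _ n ih =>
      intro u v z hu hv hn hz
      by_cases hzu : z = u
      · rw [hzu]; exact hu
      · have h0 : G.dist u z ≠ 0 := fun h => hzu ((hc.dist_eq_zero_iff.mp h).symm)
        obtain ⟨z₁, ha, hd⟩ := mg_step hc h0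
        have hd1 : G.dist u z₁ = 1 := dist_eq_one_iff_adj.mpr ha
        have hz₁z : z₁ ∈ interval G u z := by
          rw [mem_int]
          omega
        obtain ⟨hz₁v, hzi⟩ := int_trans hc hz hz₁z
        have hz₁C := mg_subclaim hc hm hxy n u v z₁ hu hv hn ha hz₁v
        have hlt : G.dist z₁ v < n := by
          have h' := hz₁v
          rw [mem_int] at h'
          have hz' := hz
          rw [mem_int] at hz'
          omega
        exact ih (G.dist z₁ v) hlt z₁ v z hz₁C hv rfl hzi
  intro u hu v hv z hz
  exact main (G.dist u v) u v z hu hv rfl hz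

include hc hm in
lemma cone_halfspace {x y : X} (hxy : G.Adj x y) : IsHalfspace G (cone G x y) := by
  constructor
  · exact cone_convex hc hm hxy
  · rw [compl_cone hc hm hxy]
    exact cone_convex hc hm hxy.symm

include hc hm in
lemma halfspace_eq_cone {H : Set X} {x y : X} (hH : IsHalfspace G H)
    (hxy : G.Adj x y) (hx : x ∉ H) (hy : y ∈ H) : H = cone G x y := by
  ext z
  constructor
  · intro hzH
    by_contra hzc
    rw [not_mem_cone hc hm hxy] at hzc
    have hxi : x ∈ interval G y z := by
      rw [mem_int, dc G y x, dist_eq_one_iff_adj.mpr hxy]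
      exact hzc
    exact hx (hH.1 y hy z hzH hxi)
  · intro hzc
    by_contra hzH
    exact (hH.2 x hx z hzH hzc) hy

lemma mem_boundary {x y : X} (hxy : G.Adj x y) :
    (x, y) ∈ edgeBoundaryIn G (cone G x y) := by
  refine ⟨hxy, ?_, ?_⟩
  · intro h
    rw [mem_cone] at h
    have h1 : G.dist x y = 1 := dist_eq_one_iff_adj.mpr hxy
    simp only [SimpleGraph.dist_self] at h
    omega
  · rw [mem_cone]
    simp [SimpleGraph.dist_self]

end Main

theorem edge_unique_halfspace (G : SimpleGraph X) (hG : IsMedianGraph G) :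
    (∀ x y : X, G.Adj x y →
      IsHalfspace G (cone G x y) ∧
      cone G x y = {z : X | G.dist y z < G.dist x z} ∧
      (x, y) ∈ edgeBoundaryIn G (cone G x y) ∧
      ∀ H : Set X, IsHalfspace G H → (x, y) ∈ edgeBoundaryIn G H → H = cone G x y) ∧
    (∀ H : Set X, IsHalfspace G H → H ≠ ∅ → H ≠ Set.univ →
      ∀ x y : X, (x, y) ∈ edgeBoundaryIn G H → H = cone G x y) ∧
    Equivalence (fun e f : {p : X × X // G.Adj p.1 p.2} =>
      ∃ H : Set X, IsHalfspace G H ∧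
        (e : X × X) ∈ edgeBoundaryIn G H ∧ (f : X × X) ∈ edgeBoundaryIn G H) := by
  obtain ⟨hc, hm⟩ := hG
  refine ⟨?_, ?_, ?_⟩
  · intro x y hxy
    refine ⟨cone_halfspace hc hm hxy, ?_, mem_boundary hxy, ?_⟩
    · ext z
      simp only [Set.mem_setOf_eq]
      rw [mem_cone_adj hxy]
      constructor
      · intro h; omega
      · intro h
        have t := hc.dist_triangle (u := x) (v := y) (w := z)
        have h1 : G.dist x y = 1 := dist_eq_one_iff_adj.mpr hxy
        omega
    · intro H hH hbd
      exact halfspace_eq_cone hc hm hH hbd.1 hbd.2.1 hbd.2.2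
  · intro H hH _ _ x y hbd
    exact halfspace_eq_cone hc hm hH hbd.1 hbd.2.1 hbd.2.2
  · refine ⟨?_, ?_, ?_⟩
    · intro e
      exact ⟨cone G (e : X × X).1 (e : X × X).2, cone_halfspace hc hm e.2,
        mem_boundary e.2, mem_boundary e.2⟩
    · rintro e f ⟨H, h1, h2, h3⟩
      exact ⟨H, h1, h3, h2⟩
    · rintro e f g ⟨H, hH, he, hf⟩ ⟨K, hK, hf', hg⟩
      have hHc : H = cone G (f : X × X).1 (f : X × X).2 :=
        halfspace_eq_cone hc hm hH hf.1 hf.2.1 hf.2.2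
      have hKc : K = cone G (f : X × X).1 (f : X × X).2 :=
        halfspace_eq_cone hc hm hK hf'.1 hf'.2.1 hf'.2.2
      exact ⟨H, hH, he, by rw [hHc, ← hKc]; exact hg⟩
end

section
/- In a median graph, any two disjoint convex sets A and B can be separated by a half-space H with A ⊆ H and H ∩ B = ∅. -/
open SimpleGraph

variable {X : Type*}

section SepAux

variable {G : SimpleGraph X}

private lemma sep_eq_of_dist_zero (hc : G.Connected) {p q : X} (h : G.dist p q = 0) : p = q := by
  by_contra hne
  exact absurd h (hc.pos_dist_of_ne hne).ne'

private lemma interval_subset (hc : G.Connected) {x y b : X} (hb : b ∈ interval G x y) :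
    interval G x b ⊆ interval G x y := by
  intro w hw
  have hw' : G.dist x w + G.dist w b = G.dist x b := hw
  have hb' : G.dist x b + G.dist b y = G.dist x y := hb
  have t1 : G.dist w y ≤ G.dist w b + G.dist b y := hc.dist_triangle
  have t2 : G.dist x y ≤ G.dist x w + G.dist w y := hc.dist_triangle
  show G.dist x w + G.dist w y = G.dist x y
  omega

private lemma mem_interval_symm {x y z : X} (hz : z ∈ interval G x y) :
    z ∈ interval G y x := by
  have h : G.dist x z + G.dist z y = G.dist x y := hz
  have c1 : G.dist x z = G.dist z x := SimpleGraph.dist_comm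
  have c2 : G.dist z y = G.dist y z := SimpleGraph.dist_comm
  have c3 : G.dist x y = G.dist y x := SimpleGraph.dist_comm
  show G.dist y z + G.dist z x = G.dist y x
  omega

private lemma exists_adj_step (hc : G.Connected) {x y : X} (hne : x ≠ y) :
    ∃ w : X, G.Adj x w ∧ G.dist w y + 1 = G.dist x y := by
  obtain ⟨p, hp⟩ := hc.exists_walk_length_eq_dist x y
  cases p with
  | nil => exact absurd rfl hne
  | @cons _ v _ hadj q =>
      refine ⟨v, hadj, ?_⟩
      have h1 : G.dist v y ≤ q.length := SimpleGraph.dist_le q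
      have h2 : G.dist x y ≤ G.dist x v + G.dist v y := hc.dist_triangle
      have h3 : G.dist x v = 1 := SimpleGraph.dist_eq_one_iff_adj.mpr hadj
      have hp' : q.length + 1 = G.dist x y := by simpa using hp
      omega

private lemma adj_dichotomy (hG : IsMedianGraph G) {a u : X} (hau : G.Adj a u) (v : X) :
    G.dist u v = G.dist a v + 1 ∨ G.dist a v = G.dist u v + 1 := by
  obtain ⟨m, ⟨h1, h2, h3⟩, -⟩ := hG.2 a u v
  have h1' : G.dist a m + G.dist m u = G.dist a u := h1
  have hau1 : G.dist a u = 1 := SimpleGraph.dist_eq_one_iff_adj.mpr hau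
  have hcase : G.dist a m = 0 ∨ G.dist m u = 0 := by omega
  rcases hcase with h0 | h0
  · have hma : a = m := sep_eq_of_dist_zero hG.1 h0
    subst hma
    have h2' : G.dist u a + G.dist a v = G.dist u v := h2
    have c1 : G.dist u a = G.dist a u := SimpleGraph.dist_comm
    left; omega
  · have hmu : m = u := sep_eq_of_dist_zero hG.1 h0
    subst hmu
    have h3' : G.dist v m + G.dist m a = G.dist v a := h3
    have c1 : G.dist m a = G.dist a m := SimpleGraph.dist_comm
    have c2 : G.dist v m = G.dist m v := SimpleGraph.dist_comm
    have c3 : G.dist v a = G.dist a v := SimpleGraph.dist_comm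
    right; omega

/-- Key lemma: the half-space determined by an edge is convex. Stated as a
contradiction from a point of the opposite side lying between two points of one side. -/
private lemma W_key (hG : IsMedianGraph G) {a u : X} (hau : G.Adj a u) :
    ∀ n x y z, G.dist u x = G.dist a x + 1 → G.dist u y = G.dist a y + 1 →
      z ∈ interval G x y → G.dist a z = G.dist u z + 1 → G.dist u z ≤ n → False := by
  have hconn := hG.1
  have hua : G.dist u a = 1 := SimpleGraph.dist_eq_one_iff_adj.mpr hau.symm
  have hau1 : G.dist a u = 1 := SimpleGraph.dist_eq_one_iff_adj.mpr hau
  intro n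
  induction n with
  | zero =>
      intro x y z hx hy hz hza hn
      have h0 : G.dist u z = 0 := Nat.le_zero.mp hn
      have hzu : u = z := sep_eq_of_dist_zero hconn h0
      subst hzu
      have hz' : G.dist x u + G.dist u y = G.dist x y := hz
      have t1 : G.dist x y ≤ G.dist x a + G.dist a y := hconn.dist_triangle
      have c1 : G.dist u x = G.dist x u := SimpleGraph.dist_comm
      have c2 : G.dist a x = G.dist x a := SimpleGraph.dist_comm
      omega
  | succ n IH =>
      intro x y z hx hy hz hza hn
      -- the one-sided reduction
      have main : ∀ w : X, G.dist u w = G.dist a w + 1 →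
          interval G w z ⊆ interval G x y → z ∈ interval G u w := by
        intro w hw hsub
        obtain ⟨m2, ⟨h1, h2, h3⟩, -⟩ := hG.2 w z u
        by_cases hcase : m2 = z
        · exact hcase ▸ h3
        · exfalso
          have h2' : G.dist z m2 + G.dist m2 u = G.dist z u := h2
          have hu_in : u ∈ interval G z a := by
            show G.dist z u + G.dist u a = G.dist z a
            have c1 : G.dist z u = G.dist u z := SimpleGraph.dist_comm
            have c2 : G.dist z a = G.dist a z := SimpleGraph.dist_comm
            omega
          have h2a : G.dist z m2 + G.dist m2 a = G.dist z a :=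
            interval_subset hconn hu_in h2
          have hm2a : G.dist a m2 = G.dist u m2 + 1 := by
            have c1 : G.dist m2 a = G.dist a m2 := SimpleGraph.dist_comm
            have c2 : G.dist m2 u = G.dist u m2 := SimpleGraph.dist_comm
            have c3 : G.dist z a = G.dist a z := SimpleGraph.dist_comm
            have c4 : G.dist z u = G.dist u z := SimpleGraph.dist_comm
            omega
          have hpos : 0 < G.dist z m2 := hconn.pos_dist_of_ne (Ne.symm hcase)
          have hle : G.dist u m2 ≤ n := by
            have c2 : G.dist m2 u = G.dist u m2 := SimpleGraph.dist_comm
            have c4 : G.dist z u = G.dist u z := SimpleGraph.dist_comm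
            omega
          exact IH x y m2 hx hy (hsub h1) hm2a hle
      have hzx : z ∈ interval G u x := main x hx (interval_subset hconn hz)
      have hzy : z ∈ interval G u y := by
        refine main y hy ?_
        intro w hw
        exact mem_interval_symm (interval_subset hconn (mem_interval_symm hz) hw)
      -- the median of (x, y, a)
      obtain ⟨p, ⟨p1, p2, p3⟩, -⟩ := hG.2 x y a
      have p3' : G.dist a p + G.dist p x = G.dist a x := p3
      have p2' : G.dist y p + G.dist p a = G.dist y a := p2
      have hax : a ∈ interval G x u := by
        show G.dist x a + G.dist a u = G.dist x u
        have c1 : G.dist x a = G.dist a x := SimpleGraph.dist_comm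
        have c2 : G.dist x u = G.dist u x := SimpleGraph.dist_comm
        omega
      have hpxa : p ∈ interval G x a := by
        show G.dist x p + G.dist p a = G.dist x a
        have c1 : G.dist x p = G.dist p x := SimpleGraph.dist_comm
        have c2 : G.dist p a = G.dist a p := SimpleGraph.dist_comm
        have c3 : G.dist x a = G.dist a x := SimpleGraph.dist_comm
        omega
      have hpxu : G.dist x p + G.dist p u = G.dist x u :=
        interval_subset hconn hax hpxa
      have hpxa' : G.dist x p + G.dist p a = G.dist x a := hpxa
      have hpu : G.dist p u = G.dist p a + 1 := by
        have c2 : G.dist x u = G.dist u x := SimpleGraph.dist_comm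
        have c3 : G.dist x a = G.dist a x := SimpleGraph.dist_comm
        omega
      have pyu : p ∈ interval G y u := by
        show G.dist y p + G.dist p u = G.dist y u
        have c1 : G.dist y a = G.dist a y := SimpleGraph.dist_comm
        have c2 : G.dist y u = G.dist u y := SimpleGraph.dist_comm
        omega
      have pux : p ∈ interval G u x := by
        show G.dist u p + G.dist p x = G.dist u x
        have c1 : G.dist u p = G.dist p u := SimpleGraph.dist_comm
        have c2 : G.dist x p = G.dist p x := SimpleGraph.dist_comm
        have c3 : G.dist x u = G.dist u x := SimpleGraph.dist_comm
        omega
      obtain ⟨q, -, huniq⟩ := hG.2 x y u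
      have e1 := huniq p ⟨p1, pyu, pux⟩
      have e2 := huniq z ⟨hz, mem_interval_symm hzy, hzx⟩
      have hpz : p = z := e1.trans e2.symm
      subst hpz
      have c1 : G.dist p a = G.dist a p := SimpleGraph.dist_comm
      have c2 : G.dist p u = G.dist u p := SimpleGraph.dist_comm
      have c3 : G.dist a p = G.dist a p := rfl
      have c4 : G.dist u p = G.dist u p := rfl
      omega

end SepAux

theorem separation_by_halfspace (G : SimpleGraph X) (hG : IsMedianGraph G)
    (A B : Set X) (hA : IsConvexSet G A) (hB : IsConvexSet G B)
    (hAB : Disjoint A B) :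
    ∃ H : Set X, IsHalfspace G H ∧ A ⊆ H ∧ H ∩ B = ∅ := by
  classical
  rcases A.eq_empty_or_nonempty with hAe | hAne
  · refine ⟨∅, ⟨fun x hx => absurd hx (Set.notMem_empty x),
      fun x _ y _ w _ => Set.notMem_empty w⟩, by simp [hAe], by simp⟩
  rcases B.eq_empty_or_nonempty with hBe | hBne
  · refine ⟨Set.univ, ⟨fun x _ y _ w _ => trivial,
      fun x hx => absurd (Set.mem_univ x) hx⟩, Set.subset_univ _, by simp [hBe]⟩
  have hconn := hG.1
  obtain ⟨a', ha'⟩ := hAne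
  obtain ⟨b', hb'⟩ := hBne
  have hS : {n : ℕ | ∃ a ∈ A, ∃ b ∈ B, G.dist a b = n}.Nonempty :=
    ⟨G.dist a' b', a', ha', b', hb', rfl⟩
  obtain ⟨a0, ha0, b0, hb0, hd⟩ := Nat.sInf_mem hS
  have hmin : ∀ a ∈ A, ∀ b ∈ B, G.dist a0 b0 ≤ G.dist a b := by
    intro a ha b hb
    rw [hd]
    exact Nat.sInf_le ⟨a, ha, b, hb, rfl⟩
  have hne : a0 ≠ b0 := by
    rintro rfl
    exact Set.disjoint_left.mp hAB ha0 hb0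
  obtain ⟨u, hadj, hstep⟩ := exists_adj_step hconn hne
  have hau1 : G.dist a0 u = 1 := SimpleGraph.dist_eq_one_iff_adj.mpr hadj
  have hua1 : G.dist u a0 = 1 := SimpleGraph.dist_eq_one_iff_adj.mpr hadj.symm
  refine ⟨{v | G.dist u v = G.dist a0 v + 1}, ⟨?_, ?_⟩, ?_, ?_⟩
  · -- convexity of H
    intro x hx y hy w hw
    by_contra hwc
    have hw' : G.dist a0 w = G.dist u w + 1 :=
      (adj_dichotomy hG hadj w).resolve_left hwc
    exact W_key hG hadj (G.dist u w) x y w hx hy hw hw' le_rfl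
  · -- convexity of Hᶜ
    intro x hx y hy w hw
    have hx' : G.dist a0 x = G.dist u x + 1 := (adj_dichotomy hG hadj x).resolve_left hx
    have hy' : G.dist a0 y = G.dist u y + 1 := (adj_dichotomy hG hadj y).resolve_left hy
    intro hwc
    have hwc' : G.dist u w = G.dist a0 w + 1 := hwc
    exact W_key hG hadj.symm (G.dist a0 w) x y w hx' hy' hw hwc' le_rfl
  · -- A ⊆ H
    intro c hc
    obtain ⟨m, ⟨h1, h2, h3⟩, -⟩ := hG.2 c a0 b0
    have hmA : m ∈ A := hA c hc a0 ha0 h1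
    have h2' : G.dist a0 m + G.dist m b0 = G.dist a0 b0 := h2
    have hm0 : G.dist a0 m = 0 := by
      have := hmin m hmA b0 hb0
      have c1 : G.dist m b0 = G.dist m b0 := rfl
      omega
    have : a0 = m := sep_eq_of_dist_zero hconn hm0
    subst this
    have h3' : G.dist b0 a0 + G.dist a0 c = G.dist b0 c := h3
    have t1 : G.dist u c ≤ G.dist u a0 + G.dist a0 c := hconn.dist_triangle
    have t2 : G.dist b0 c ≤ G.dist b0 u + G.dist u c := hconn.dist_triangle
    have c1 : G.dist b0 a0 = G.dist a0 b0 := SimpleGraph.dist_comm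
    have c2 : G.dist b0 u = G.dist u b0 := SimpleGraph.dist_comm
    have c3 : G.dist a0 c = G.dist a0 c := rfl
    show G.dist u c = G.dist a0 c + 1
    omega
  · -- H ∩ B = ∅
    rw [Set.eq_empty_iff_forall_notMem]
    rintro b ⟨hbH, hbB⟩
    have hbH' : G.dist u b = G.dist a0 b + 1 := hbH
    obtain ⟨m, ⟨h1, h2, h3⟩, -⟩ := hG.2 a0 b0 b
    have hmB : m ∈ B := hB b0 hb0 b hbB h2
    have h1' : G.dist a0 m + G.dist m b0 = G.dist a0 b0 := h1
    have hm0 : G.dist m b0 = 0 := by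
      have := hmin a0 ha0 m hmB
      omega
    have : m = b0 := sep_eq_of_dist_zero hconn hm0
    subst this
    have h3' : G.dist b m + G.dist m a0 = G.dist b a0 := h3
    have t1 : G.dist u b ≤ G.dist u m + G.dist m b := hconn.dist_triangle
    have c1 : G.dist m a0 = G.dist a0 m := SimpleGraph.dist_comm
    have c2 : G.dist b a0 = G.dist a0 b := SimpleGraph.dist_comm
    have c3 : G.dist m b = G.dist b m := SimpleGraph.dist_comm
    omega
end

section
/- In a median graph, every interval [x,y] between two vertices is finite; more generally, the convex hull of any finite set of vertices is finite. -/
open SimpleGraph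

variable {X : Type*}

/-!
Intervals. Let `z` be a neighbour of `x` on a geodesic to `y`. A vertex `w ∈ [x, y]` lies either
in `[z, y]` or in the cone `{w | x ∈ [z, w]}`; on the cone, `w ↦ median(w, z, y)` lands in
`[z, y]` on a neighbour of `w` outside the cone. Cones are convex, and a vertex outside a convex
set has at most one neighbour in it, so this map is injective; induct on `d(x, y)`.

Hulls. Convex sets are gated (a nearest point is a gate), which makes cones `{z | y ∈ [a, z]}`
convex. If `C` is convex, `x ∈ conv (C ∪ {b})`, `p` is the gate of `x` in `C` and
`y = median(x, p, b)`, then the cone `{z | y ∈ [x, z]}` contains `C ∪ {b}`, hence `x`; so `y = x`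
and `x ∈ [p, b]`. Thus `conv (A ∪ {b}) ⊆ ⋃ c ∈ conv A, [c, b]`, and we induct on `A`.
-/

section Interval

variable {G : SimpleGraph X} {x y z w : X}

theorem mem_interval : z ∈ interval G x y ↔ G.dist x z + G.dist z y = G.dist x y := Iff.rfl

theorem left_mem_interval (G : SimpleGraph X) (x y : X) : x ∈ interval G x y := by
  simp [mem_interval]

theorem right_mem_interval (G : SimpleGraph X) (x y : X) : y ∈ interval G x y := by
  simp [mem_interval]

theorem interval_comm (G : SimpleGraph X) (x y : X) : interval G x y = interval G y x := by
  ext z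
  have := G.dist_comm (u := x) (v := y)
  have := G.dist_comm (u := x) (v := z)
  have := G.dist_comm (u := y) (v := z)
  rw [mem_interval, mem_interval]
  omega

theorem interval_self (hc : G.Connected) (x : X) : interval G x x = {x} := by
  ext z
  simp only [mem_interval, dist_self, Set.mem_singleton_iff]
  constructor
  · intro h
    exact ((hc.dist_eq_zero_iff).1 (by omega)).symm
  · rintro rfl
    simp

theorem interval_subset_of_mem (hc : G.Connected) (hz : z ∈ interval G x y) :
    interval G x z ⊆ interval G x y := by
  intro w hw
  rw [mem_interval] at *
  have := hc.dist_triangle (u := w) (v := z) (w := y)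
  have := hc.dist_triangle (u := x) (v := w) (w := y)
  omega

theorem interval_subset_of_mem' (hc : G.Connected) (hz : z ∈ interval G x y) :
    interval G z y ⊆ interval G x y := by
  rw [interval_comm G z, interval_comm G x]
  exact interval_subset_of_mem hc (by rwa [interval_comm])

theorem mem_interval_of_mem_of_mem (hc : G.Connected) (hz : z ∈ interval G x y)
    (hw : w ∈ interval G x z) : z ∈ interval G w y := by
  rw [mem_interval] at *
  have := hc.dist_triangle (u := w) (v := z) (w := y)
  have := hc.dist_triangle (u := x) (v := w) (w := y)
  omega

theorem mem_interval_of_mem_of_mem' (hc : G.Connected) (hz : z ∈ interval G x y)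
    (hw : w ∈ interval G z y) : z ∈ interval G x w := by
  rw [interval_comm] at *
  exact mem_interval_of_mem_of_mem hc hz hw

theorem eq_of_mem_interval_of_mem_interval (hc : G.Connected) (h₁ : z ∈ interval G x y)
    (h₂ : x ∈ interval G z y) : x = z := by
  rw [mem_interval] at h₁ h₂
  have := G.dist_comm (u := x) (v := z)
  exact (hc.dist_eq_zero_iff).1 (by omega)

theorem exists_adj_mem_interval (hc : G.Connected) (hxy : x ≠ y) :
    ∃ z, G.Adj x z ∧ z ∈ interval G x y := by
  obtain ⟨p, hp⟩ := hc.exists_walk_length_eq_dist x y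
  cases p with
  | nil => exact absurd rfl hxy
  | @cons _ z _ hadj q =>
    refine ⟨z, hadj, ?_⟩
    rw [Walk.length_cons] at hp
    have := dist_eq_one_iff_adj.2 hadj
    have := dist_le q
    have := hc.dist_triangle (u := x) (v := z) (w := y)
    rw [mem_interval]
    omega

end Interval

def IsMedian (G : SimpleGraph X) (x y z m : X) : Prop :=
  m ∈ interval G x y ∧ m ∈ interval G y z ∧ m ∈ interval G z x

section Median

variable {G : SimpleGraph X} {x y z : X}

theorem IsMedian.eq (hG : IsMedianGraph G) {m₁ m₂ : X} (h₁ : IsMedian G x y z m₁)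
    (h₂ : IsMedian G x y z m₂) : m₁ = m₂ :=
  (hG.2 x y z).unique h₁ h₂

theorem isMedian_medianOf (hG : IsMedianGraph G) (x y z : X) :
    IsMedian G x y z (medianOf G x y z) := by
  rw [medianOf, dif_pos (hG.2 x y z)]
  exact (hG.2 x y z).choose_spec.1

theorem SimpleGraph.Adj.mem_interval_or (hG : IsMedianGraph G) (h : G.Adj x z) (w : X) :
    z ∈ interval G x w ∨ x ∈ interval G z w := by
  obtain ⟨hxz, hzw, hwx⟩ := isMedian_medianOf hG x z w
  have hd := dist_eq_one_iff_adj.2 h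
  rw [mem_interval] at hxz
  rcases Nat.eq_zero_or_pos (G.dist x (medianOf G x z w)) with h0 | h0
  · rw [← (hG.1.dist_eq_zero_iff).1 h0] at hzw
    exact Or.inr hzw
  · rw [(hG.1.dist_eq_zero_iff).1 (by omega : G.dist (medianOf G x z w) z = 0)] at hwx
    exact Or.inl (by rwa [interval_comm])

end Median

section Convex

variable {G : SimpleGraph X} {a b c c' p q r v w₁ w₂ x : X} {C : Set X}

theorem exists_closer_of_notMem_interval (hG : IsMedianGraph G) (hp : p ∈ interval G a b)
    (hr : r ∈ interval G p q) (hpr : p ∉ interval G r b) :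
    ∃ s ∈ interval G a b, r ∈ interval G s q ∧ G.dist s q < G.dist p q := by
  obtain ⟨hspr, hsrb, hsbp⟩ := isMedian_medianOf hG p r b
  set s := medianOf G p r b
  have hsp : s ≠ p := fun h => hpr (h ▸ hsrb)
  have hspq : s ∈ interval G p q := interval_subset_of_mem hG.1 hr hspr
  refine ⟨s, interval_subset_of_mem' hG.1 hp (by rwa [interval_comm]),
    mem_interval_of_mem_of_mem hG.1 hr hspr, ?_⟩
  have := hG.1.pos_dist_of_ne hsp.symm
  rw [mem_interval] at hspq
  omega

theorem isMedian_or_exists_closer (hG : IsMedianGraph G) (hp : p ∈ interval G a b)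
    (hr : r ∈ interval G p q) :
    IsMedian G a b r p ∨
      ∃ s ∈ interval G a b, r ∈ interval G s q ∧ G.dist s q < G.dist p q := by
  by_cases hb : p ∈ interval G r b
  · by_cases ha : p ∈ interval G r a
    · exact Or.inl ⟨hp, by rwa [interval_comm], ha⟩
    · obtain ⟨s, hs, hsq⟩ := exists_closer_of_notMem_interval hG (by rwa [interval_comm]) hr ha
      exact Or.inr ⟨s, by rwa [interval_comm], hsq⟩
  · exact Or.inr (exists_closer_of_notMem_interval hG hp hr hb)

theorem isConvexSet_interval (hG : IsMedianGraph G) (a b : X) :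
    IsConvexSet G (interval G a b) := by
  intro p hp q hq r hr
  induction hn : G.dist p q using Nat.strong_induction_on generalizing p q with
  | _ n ih =>
  -- if neither `p` nor `q` can move towards the other, both are the median of `a, b, r`
  rcases isMedian_or_exists_closer hG hp hr with hpm | ⟨s, hs, hrs, hlt⟩
  · rw [interval_comm] at hr
    rcases isMedian_or_exists_closer hG hq hr with hqm | ⟨s, hs, hrs, hlt⟩
    · rw [hpm.eq hG hqm, interval_self hG.1] at hr
      rwa [hr]
    · rw [G.dist_comm (u := q)] at hlt
      exact ih _ (by omega) s hs p hp hrs rfl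
  · exact ih _ (by omega) s hs q hq hrs rfl

theorem mem_interval_of_forall_dist_le (hG : IsMedianGraph G) (hC : IsConvexSet G C)
    (hc : c ∈ C) (hmin : ∀ c' ∈ C, G.dist x c ≤ G.dist x c') (hc' : c' ∈ C) :
    c ∈ interval G x c' := by
  obtain ⟨hxc, hcc', hc'x⟩ := isMedian_medianOf hG x c c'
  have hm := hmin _ (hC c hc c' hc' hcc')
  rw [mem_interval] at hxc
  rw [← (hG.1.dist_eq_zero_iff).1 (by omega : G.dist (medianOf G x c c') c = 0),
    interval_comm]
  exact hc'x

theorem exists_gate (hG : IsMedianGraph G) (hC : IsConvexSet G C) (hne : C.Nonempty) (x : X) :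
    ∃ p ∈ C, ∀ c ∈ C, p ∈ interval G x c :=
  ⟨_, Function.argminOn_mem _ C hne, fun _ hc =>
    mem_interval_of_forall_dist_le hG hC (Function.argminOn_mem _ C hne)
      (fun _ hc' => Function.argminOn_le (G.dist x) C hc') hc⟩

theorem eq_of_adj_of_notMem (hG : IsMedianGraph G) (hC : IsConvexSet G C) (hv : v ∉ C)
    (hw₁ : w₁ ∈ C) (hw₂ : w₂ ∈ C) (h₁ : G.Adj v w₁) (h₂ : G.Adj v w₂) :
    w₁ = w₂ := by
  have hmin : ∀ c ∈ C, G.dist v w₁ ≤ G.dist v c := fun c hc => by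
    rw [dist_eq_one_iff_adj.2 h₁]
    exact hG.1.pos_dist_of_ne fun h => hv (h ▸ hc)
  have h := mem_interval_of_forall_dist_le hG hC hw₁ hmin hw₂
  rw [mem_interval, dist_eq_one_iff_adj.2 h₁, dist_eq_one_iff_adj.2 h₂] at h
  exact (hG.1.dist_eq_zero_iff).1 (by omega)

theorem isConvexSet_cone (hG : IsMedianGraph G) (a y : X) : IsConvexSet G (cone G a y) := by
  intro x₁ (h₁ : y ∈ interval G a x₁) x₂ (h₂ : y ∈ interval G a x₂) z hz
  obtain ⟨g, hg, hgate⟩ :=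
    exists_gate hG (isConvexSet_interval hG x₁ x₂) ⟨x₁, left_mem_interval G x₁ x₂⟩ a
  obtain ⟨ht₁, ht₁₂, ht₂⟩ := isMedian_medianOf hG y x₁ x₂
  have hmed : IsMedian G a x₁ x₂ g :=
    ⟨hgate _ (left_mem_interval G x₁ x₂), hg,
      by rw [interval_comm]; exact hgate _ (right_mem_interval G x₁ x₂)⟩
  have htg : medianOf G y x₁ x₂ = g := IsMedian.eq hG
    ⟨interval_subset_of_mem' hG.1 h₁ ht₁, ht₁₂, by
      rw [interval_comm] at ht₂ ⊢; exact interval_subset_of_mem' hG.1 h₂ ht₂⟩ hmed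
  have hyg : y ∈ interval G a g := by
    rw [← htg, interval_comm]
    rw [interval_comm] at h₁ ht₁
    exact mem_interval_of_mem_of_mem hG.1 h₁ ht₁
  exact interval_subset_of_mem hG.1 (hgate z hz) hyg

end Convex

section Hull

variable {G : SimpleGraph X} {A B C : Set X}

theorem subset_convexHullG (G : SimpleGraph X) (A : Set X) : A ⊆ convexHullG G A :=
  fun _ hx => Set.mem_sInter.2 fun _ hB => hB.2 hx

theorem convexHullG_subset (hB : IsConvexSet G B) (hAB : A ⊆ B) : convexHullG G A ⊆ B :=
  Set.sInter_subset_of_mem ⟨hB, hAB⟩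

theorem isConvexSet_convexHullG (G : SimpleGraph X) (A : Set X) :
    IsConvexSet G (convexHullG G A) :=
  fun x hx y hy _ hz => Set.mem_sInter.2 fun B hB =>
    hB.1 x (Set.mem_sInter.1 hx B hB) y (Set.mem_sInter.1 hy B hB) hz

theorem convexHullG_mono (hAB : A ⊆ B) : convexHullG G A ⊆ convexHullG G B :=
  convexHullG_subset (isConvexSet_convexHullG G B) (hAB.trans (subset_convexHullG G B))

theorem convexHullG_insert_subset (hG : IsMedianGraph G) (hC : IsConvexSet G C)
    (hne : C.Nonempty) (b : X) : convexHullG G (insert b C) ⊆ ⋃ c ∈ C, interval G c b := by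
  intro x hx
  obtain ⟨p, hp, hgate⟩ := exists_gate hG hC hne x
  obtain ⟨hxp, hpb, hbx⟩ := isMedian_medianOf hG x p b
  have hcone : insert b C ⊆ cone G x (medianOf G x p b) := by
    rintro c (rfl | hc)
    · show _ ∈ interval G x c
      rwa [interval_comm]
    · exact interval_subset_of_mem hG.1 (hgate c hc) hxp
  have hxx : medianOf G x p b ∈ interval G x x :=
    convexHullG_subset (isConvexSet_cone hG x _) hcone hx
  rw [interval_self hG.1, Set.mem_singleton_iff] at hxx
  exact Set.mem_biUnion hp (hxx ▸ hpb)

end Hull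

section IntervalFinite

variable {G : SimpleGraph X} {x y z w : X}

theorem interval_subset_union_inter_cone (hG : IsMedianGraph G) (hxz : G.Adj x z) :
    interval G x y ⊆ interval G z y ∪ interval G x y ∩ cone G z x := by
  intro w hw
  rcases hxz.mem_interval_or hG w with h | h
  · exact Or.inl (mem_interval_of_mem_of_mem hG.1 hw h)
  · exact Or.inr ⟨hw, h⟩

theorem adj_medianOf (hG : IsMedianGraph G) (hxz : G.Adj x z) (hz : z ∈ interval G x y)
    (hw : w ∈ interval G x y) (hxw : x ∈ interval G z w) : G.Adj w (medianOf G w z y) := by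
  obtain ⟨h₁, h₂, h₃⟩ := isMedian_medianOf hG w z y
  set v := medianOf G w z y
  rw [mem_interval] at *
  have := dist_eq_one_iff_adj.2 hxz
  have := G.dist_comm (u := x) (v := z)
  have := G.dist_comm (u := w) (v := z)
  have := G.dist_comm (u := v) (v := z)
  have := G.dist_comm (u := v) (v := y)
  have := G.dist_comm (u := v) (v := w)
  have := G.dist_comm (u := w) (v := y)
  exact dist_eq_one_iff_adj.1 (by omega)

theorem medianOf_notMem_cone (hG : IsMedianGraph G) (hxz : G.Adj x z)
    (hz : z ∈ interval G x y) (w : X) : medianOf G w z y ∉ cone G z x := fun hx =>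
  hxz.ne <| eq_of_mem_interval_of_mem_interval hG.1
    (mem_interval_of_mem_of_mem' hG.1 hz (isMedian_medianOf hG w z y).2.1) hx

theorem injOn_medianOf_inter_cone (hG : IsMedianGraph G) (hxz : G.Adj x z)
    (hz : z ∈ interval G x y) :
    Set.InjOn (fun w => medianOf G w z y) (interval G x y ∩ cone G z x) := by
  rintro w₁ ⟨hw₁, hc₁⟩ w₂ ⟨hw₂, hc₂⟩
    (heq : medianOf G w₁ z y = medianOf G w₂ z y)
  have h₂ := (adj_medianOf hG hxz hz hw₂ hc₂).symm
  rw [← heq] at h₂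
  exact eq_of_adj_of_notMem hG (isConvexSet_cone hG z x) (medianOf_notMem_cone hG hxz hz w₁)
    hc₁ hc₂ (adj_medianOf hG hxz hz hw₁ hc₁).symm h₂

theorem interval_finite (hG : IsMedianGraph G) (x y : X) : (interval G x y).Finite := by
  induction hn : G.dist x y using Nat.strong_induction_on generalizing x with
  | _ n ih =>
  by_cases hxy : x = y
  · rw [hxy, interval_self hG.1]
    exact Set.finite_singleton y
  obtain ⟨z, hxz, hz⟩ := exists_adj_mem_interval hG.1 hxy
  have hzy : (interval G z y).Finite := by
    have := dist_eq_one_iff_adj.2 hxz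
    rw [mem_interval] at hz
    exact ih _ (by omega) z rfl
  refine (hzy.union ?_).subset (interval_subset_union_inter_cone hG hxz)
  exact Set.Finite.of_injOn (fun w _ => (isMedian_medianOf hG w z y).2.1)
    (injOn_medianOf_inter_cone hG hxz hz) hzy

end IntervalFinite

theorem interval_finite_and_convexHull_finite (G : SimpleGraph X) (hG : IsMedianGraph G) :
    (∀ x y : X, (interval G x y).Finite) ∧
    (∀ A : Set X, A.Finite → (convexHullG G A).Finite) := by
  refine ⟨interval_finite hG, fun A hA => ?_⟩
  induction A, hA using Set.Finite.induction_on with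
  | empty => exact Set.finite_empty.subset (convexHullG_subset (fun _ h => h.elim) subset_rfl)
  | @insert b s _ _ ih =>
    rcases s.eq_empty_or_nonempty with rfl | hs
    · refine (interval_finite hG b b).subset (convexHullG_subset (isConvexSet_interval hG b b) ?_)
      simpa using left_mem_interval G b b
    · refine (ih.biUnion fun c _ => interval_finite hG c b).subset ?_
      calc convexHullG G (insert b s)
          ⊆ convexHullG G (insert b (convexHullG G s)) :=
            convexHullG_mono (Set.insert_subset_insert (subset_convexHullG G s))
        _ ⊆ ⋃ c ∈ convexHullG G s, interval G c b :=
            convexHullG_insert_subset hG (isConvexSet_convexHullG G s)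
              (hs.mono (subset_convexHullG G s)) b
end
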